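/- If a sample (P, N) of finite traces admits a separating formula in LTL(F, X, ∧, ∨) (satisfied by every trace in P and by no trace in N), then it admits a separating formula that is a positive Boolean combination of directed LTL formulas. -/

import Mathlib

/-- Syntax of LTL (over finite traces), with literals, Boolean connectives,
negation, next, finally and globally. -/
inductive LTL (P : Type) : Type
  | atom  : P → LTL P
  | natom : P → LTL P
  | and   : LTL P → LTL P → LTL P
  | or    : LTL P → LTL P → LTL P
  | not   : LTL P → LTL P
  | next  : LTL P → LTL P
  | fin   : LTL P → LTL P
  | glob  : LTL P → LTL P

/-- Finite-trace semantics, positions are 1-based: `Sat t φ i` means `t, i ⊨ φ`. -/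
def Sat {P : Type} (t : List (Set P)) : LTL P → ℕ → Prop
  | .atom p,  i => p ∈ t.getD (i - 1) ∅
  | .natom p, i => p ∉ t.getD (i - 1) ∅
  | .and φ ψ, i => Sat t φ i ∧ Sat t ψ i
  | .or φ ψ,  i => Sat t φ i ∨ Sat t ψ i
  | .not φ,   i => ¬ Sat t φ i
  | .next φ,  i => i < t.length ∧ Sat t φ (i + 1)
  | .fin φ,   i => ∃ j, i ≤ j ∧ j ≤ t.length ∧ Sat t φ j
  | .glob φ,  i => ∀ j, i ≤ j → j ≤ t.length → Sat t φ j

/-- `X^n φ`: n-fold application of the next operator. -/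
def iterX {P : Type} : ℕ → LTL P → LTL P
  | 0, φ => φ
  | n + 1, φ => .next (iterX n φ)

/-- `last := ¬ X (p ∨ ¬ p)`, holding exactly at the final position. -/
def lastF {P : Type} (p : P) : LTL P :=
  .not (.next (.or (.atom p) (.natom p)))

/-- A literal: an atomic proposition with a polarity. -/
abbrev Lit (P : Type) := P × Bool

def Lit.toLTL {P : Type} : Lit P → LTL P
  | (p, true) => .atom p
  | (p, false) => .natom p

/-- A partial symbol: a nonempty conjunction of literals. -/
structure PSym (P : Type) where
  head : Lit P
  tail : List (Lit P)

/-- The LTL formula (conjunction of literals) corresponding to a partial symbol. -/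
def PSym.toLTL {P : Type} (s : PSym P) : LTL P :=
  s.tail.foldl (fun a l => .and a l.toLTL) s.head.toLTL

/-- Directed LTL formulas:
`φ ::= Xⁿ s | F Xⁿ s | Xⁿ (s ∧ φ) | F Xⁿ (s ∧ φ)` with `s` a partial symbol. -/
inductive DLTL (P : Type) : Type
  | xs     : ℕ → PSym P → DLTL P
  | fxs    : ℕ → PSym P → DLTL P
  | xcons  : ℕ → PSym P → DLTL P → DLTL P
  | fxcons : ℕ → PSym P → DLTL P → DLTL P

/-- Translation of directed formulas to LTL. -/
def DLTL.toLTL {P : Type} : DLTL P → LTL P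
  | .xs n s => iterX n s.toLTL
  | .fxs n s => .fin (iterX n s.toLTL)
  | .xcons n s φ => iterX n (.and s.toLTL φ.toLTL)
  | .fxcons n s φ => .fin (iterX n (.and s.toLTL φ.toLTL))

/-- Positive Boolean combinations of directed LTL formulas. -/
inductive PBC (P : Type) : Type
  | base : DLTL P → PBC P
  | and  : PBC P → PBC P → PBC P
  | or   : PBC P → PBC P → PBC P

/-- Semantics of positive Boolean combinations of directed formulas. -/
def PBC.sat {P : Type} (t : List (Set P)) : PBC P → ℕ → Prop
  | .base d, i => Sat t d.toLTL i
  | .and a b, i => PBC.sat t a i ∧ PBC.sat t b i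
  | .or a b, i => PBC.sat t a i ∨ PBC.sat t b i

/-- The fragment LTL(F, X, ∧, ∨). -/
def IsFX {P : Type} : LTL P → Prop
  | .atom _ => True
  | .natom _ => True
  | .and φ ψ => IsFX φ ∧ IsFX ψ
  | .or φ ψ => IsFX φ ∧ IsFX ψ
  | .next φ => IsFX φ
  | .fin φ => IsFX φ
  | _ => False

/-! ### Auxiliary material for the proof -/

/-- Extract some proposition from an LTL formula (used only as a default). -/
def getP {P : Type} : LTL P → P
  | .atom p => p
  | .natom p => p
  | .and a _ => getP a
  | .or a _ => getP a
  | .not a => getP a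
  | .next a => getP a
  | .fin a => getP a
  | .glob a => getP a

lemma sat_iterX {P : Type} (t : List (Set P)) (φ : LTL P) :
    ∀ n i, Sat t (iterX n φ) i ↔ ((n = 0 ∨ i + n ≤ t.length) ∧ Sat t φ (i + n)) := by
  intro n
  induction n with
  | zero => intro i; simp [iterX]
  | succ n ih =>
    intro i
    show (i < t.length ∧ Sat t (iterX n φ) (i + 1)) ↔ _
    rw [ih]
    have harith : i + 1 + n = i + (n + 1) := by omega
    rw [harith]
    constructor
    · rintro ⟨h1, h2, h3⟩
      refine ⟨Or.inr ?_, h3⟩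
      rcases h2 with h | h <;> omega
    · rintro ⟨h1, h2⟩
      have hle : i + (n + 1) ≤ t.length := by rcases h1 with h | h <;> omega
      exact ⟨by omega, Or.inr (by omega), h2⟩

/-- Bounded disjunction `f 0 ∨ f 1 ∨ ... ∨ f k`. -/
def orUpTo {P : Type} (f : ℕ → LTL P) : ℕ → LTL P
  | 0 => f 0
  | k + 1 => .or (f (k + 1)) (orUpTo f k)

lemma sat_orUpTo {P : Type} (t : List (Set P)) (f : ℕ → LTL P) :
    ∀ k i, Sat t (orUpTo f k) i ↔ ∃ n, n ≤ k ∧ Sat t (f n) i := by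
  intro k
  induction k with
  | zero =>
    intro i
    constructor
    · intro h; exact ⟨0, le_refl _, h⟩
    · rintro ⟨n, hn, h⟩; simpa [Nat.le_zero.mp hn, orUpTo] using h
  | succ k ih =>
    intro i
    show (Sat t (f (k + 1)) i ∨ Sat t (orUpTo f k) i) ↔ _
    rw [ih]
    constructor
    · rintro (h | ⟨n, hn, h⟩)
      · exact ⟨k + 1, le_refl _, h⟩
      · exact ⟨n, by omega, h⟩
    · rintro ⟨n, hn, h⟩
      rcases Nat.eq_or_lt_of_le hn with h' | h'
      · left; rwa [← h']
      · right; exact ⟨n, by omega, h⟩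

/-- Eliminating `F` via bounded disjunctions of `X`s, for traces of length ≤ L. -/
def elimF {P : Type} (L : ℕ) : LTL P → LTL P
  | .atom p => .atom p
  | .natom p => .natom p
  | .and a b => .and (elimF L a) (elimF L b)
  | .or a b => .or (elimF L a) (elimF L b)
  | .not a => .not a
  | .next a => .next (elimF L a)
  | .fin a => orUpTo (fun n => iterX n (elimF L a)) L
  | .glob a => .glob a

/-- The fragment LTL(X, ∧, ∨). -/
def IsX {P : Type} : LTL P → Prop
  | .atom _ => True
  | .natom _ => True
  | .and a b => IsX a ∧ IsX b
  | .or a b => IsX a ∧ IsX b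
  | .next a => IsX a
  | _ => False

lemma isX_iterX {P : Type} (φ : LTL P) (h : IsX φ) : ∀ n, IsX (iterX n φ)
  | 0 => h
  | n + 1 => isX_iterX φ h n

lemma isX_orUpTo {P : Type} (f : ℕ → LTL P) (h : ∀ n, IsX (f n)) :
    ∀ k, IsX (orUpTo f k)
  | 0 => h 0
  | k + 1 => ⟨h (k + 1), isX_orUpTo f h k⟩

lemma isX_elimF {P : Type} (L : ℕ) : ∀ φ : LTL P, IsFX φ → IsX (elimF L φ)
  | .atom _, _ => trivial
  | .natom _, _ => trivial
  | .and a b, h => ⟨isX_elimF L a h.1, isX_elimF L b h.2⟩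
  | .or a b, h => ⟨isX_elimF L a h.1, isX_elimF L b h.2⟩
  | .next a, h => isX_elimF L a h
  | .fin a, h => isX_orUpTo _ (fun n => isX_iterX _ (isX_elimF L a h) n) L

lemma elimF_correct {P : Type} (L : ℕ) (t : List (Set P)) (ht : t.length ≤ L) :
    ∀ φ : LTL P, IsFX φ → ∀ i, i ≤ t.length → (Sat t φ i ↔ Sat t (elimF L φ) i) := by
  intro φ
  induction φ with
  | atom p => intro _ i _; exact Iff.rfl
  | natom p => intro _ i _; exact Iff.rfl
  | and a b iha ihb =>
    intro h i hi
    exact and_congr (iha h.1 i hi) (ihb h.2 i hi)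
  | or a b iha ihb =>
    intro h i hi
    exact or_congr (iha h.1 i hi) (ihb h.2 i hi)
  | not a iha => intro h; exact absurd h id
  | next a iha =>
    intro h i hi
    show (i < t.length ∧ Sat t a (i + 1)) ↔ (i < t.length ∧ Sat t (elimF L a) (i + 1))
    constructor
    · rintro ⟨h1, h2⟩; exact ⟨h1, (iha h (i + 1) (by omega)).mp h2⟩
    · rintro ⟨h1, h2⟩; exact ⟨h1, (iha h (i + 1) (by omega)).mpr h2⟩
  | fin a iha =>
    intro h i hi
    show (∃ j, i ≤ j ∧ j ≤ t.length ∧ Sat t a j) ↔ _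
    rw [show elimF L (.fin a) = orUpTo (fun n => iterX n (elimF L a)) L from rfl,
      sat_orUpTo]
    constructor
    · rintro ⟨j, hij, hjl, hj⟩
      refine ⟨j - i, by omega, ?_⟩
      rw [sat_iterX]
      have : i + (j - i) = j := by omega
      rw [this]
      exact ⟨by omega, (iha h j hjl).mp hj⟩
    · rintro ⟨n, hn, hsat⟩
      rw [sat_iterX] at hsat
      obtain ⟨hg, hs⟩ := hsat
      have hinl : i + n ≤ t.length := by rcases hg with h' | h' <;> omega
      exact ⟨i + n, by omega, hinl, (iha h (i + n) hinl).mpr hs⟩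
  | glob a iha => intro h; exact absurd h id

/-- Translation of an `LTL(X,∧,∨)` formula under `n` `X`s into a `PBC`. -/
def toPBC {P : Type} (d : Lit P) : ℕ → LTL P → PBC P
  | n, .atom p => .base (.xs n ⟨(p, true), []⟩)
  | n, .natom p => .base (.xs n ⟨(p, false), []⟩)
  | n, .and a b => .and (toPBC d n a) (toPBC d n b)
  | n, .or a b => .or (toPBC d n a) (toPBC d n b)
  | n, .next a => toPBC d (n + 1) a
  | n, _ => .base (.xs n ⟨d, []⟩)

lemma toPBC_correct {P : Type} (d : Lit P) (t : List (Set P)) :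
    ∀ φ : LTL P, IsX φ → ∀ n i,
      (PBC.sat t (toPBC d n φ) i ↔ Sat t (iterX n φ) i) := by
  intro φ
  induction φ with
  | atom p =>
    intro _ n i
    show Sat t (DLTL.toLTL (.xs n ⟨(p, true), []⟩)) i ↔ _
    have : DLTL.toLTL (DLTL.xs n ⟨(p, true), []⟩) = iterX n (LTL.atom p) := rfl
    rw [this]
  | natom p =>
    intro _ n i
    show Sat t (DLTL.toLTL (.xs n ⟨(p, false), []⟩)) i ↔ _
    have : DLTL.toLTL (DLTL.xs n ⟨(p, false), []⟩) = iterX n (LTL.natom p) := rfl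
    rw [this]
  | and a b iha ihb =>
    intro h n i
    show (PBC.sat t (toPBC d n a) i ∧ PBC.sat t (toPBC d n b) i) ↔ _
    rw [iha h.1 n i, ihb h.2 n i, sat_iterX, sat_iterX, sat_iterX]
    show _ ↔ _ ∧ (Sat t a (i + n) ∧ Sat t b (i + n))
    tauto
  | or a b iha ihb =>
    intro h n i
    show (PBC.sat t (toPBC d n a) i ∨ PBC.sat t (toPBC d n b) i) ↔ _
    rw [iha h.1 n i, ihb h.2 n i, sat_iterX, sat_iterX, sat_iterX]
    show _ ↔ _ ∧ (Sat t a (i + n) ∨ Sat t b (i + n))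
    tauto
  | not a iha => intro h; exact absurd h id
  | next a iha =>
    intro h n i
    show PBC.sat t (toPBC d (n + 1) a) i ↔ _
    rw [iha h (n + 1) i, sat_iterX, sat_iterX]
    show _ ↔ _ ∧ (i + n < t.length ∧ Sat t a (i + n + 1))
    constructor
    · rintro ⟨hg, hs⟩
      have h1 : i + (n + 1) ≤ t.length := by rcases hg with h' | h' <;> omega
      have h2 : i + (n + 1) = i + n + 1 := by omega
      exact ⟨Or.inr (by omega), by omega, by rwa [h2] at hs⟩
    · rintro ⟨hg, h1, hs⟩
      have h2 : i + (n + 1) = i + n + 1 := by omega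
      exact ⟨Or.inr (by omega), by rwa [h2]⟩
  | fin a iha => intro h; exact absurd h id
  | glob a iha => intro h; exact absurd h id

theorem separating_pbc_of_separating_fx {P : Type}
    (Pos Neg : Set (List (Set P)))
    (hPfin : Pos.Finite) (hNfin : Neg.Finite) (hdisj : Disjoint Pos Neg)
    (hPne : ∀ t ∈ Pos, t ≠ []) (hNne : ∀ t ∈ Neg, t ≠ [])
    (hsep : ∃ φ : LTL P, IsFX φ ∧
      (∀ t ∈ Pos, Sat t φ 1) ∧ (∀ t ∈ Neg, ¬ Sat t φ 1)) :
    ∃ b : PBC P, (∀ t ∈ Pos, PBC.sat t b 1) ∧ (∀ t ∈ Neg, ¬ PBC.sat t b 1) := by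
  obtain ⟨φ, hfx, hpos, hneg⟩ := hsep
  obtain ⟨L, hL⟩ : ∃ L, ∀ t ∈ Pos ∪ Neg, t.length ≤ L := by
    obtain ⟨L, hL⟩ := ((hPfin.union hNfin).image List.length).bddAbove
    exact ⟨L, fun t ht => hL (Set.mem_image_of_mem _ ht)⟩
  set d : Lit P := (getP φ, true)
  refine ⟨toPBC d 0 (elimF L φ), fun t ht => ?_, fun t ht hc => ?_⟩
  · have h1 : 1 ≤ t.length := List.length_pos_iff.mpr (hPne t ht)
    have hl : t.length ≤ L := hL t (Or.inl ht)
    have := (elimF_correct L t hl φ hfx 1 h1).mp (hpos t ht)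
    exact (toPBC_correct d t (elimF L φ) (isX_elimF L φ hfx) 0 1).mpr this
  · have h1 : 1 ≤ t.length := List.length_pos_iff.mpr (hNne t ht)
    have hl : t.length ≤ L := hL t (Or.inr ht)
    have := (toPBC_correct d t (elimF L φ) (isX_elimF L φ hfx) 0 1).mp hc
    exact hneg t ht ((elimF_correct L t hl φ hfx 1 h1).mpr this)
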